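/- Let a, b > 0. Define the sequence s_0 = a and s_{k+1} = a + b/s_k (the finite generalized continued fractions). Then s_k converges to φ(a,b) = (a + √(a² + 4b))/2 as k → ∞. -/

import Mathlib

/-! Write `φ = (a + √(a² + 4b))/2`, the positive fixed point of `f x = a + b/x`. From
`f x - φ = b/(x φ) · (φ - x)` one step of the recursion need not contract, but two steps do:
for `x ≥ a` one has `x · f x = a x + b ≥ a² + b` and `φ² = a φ + b ≥ b`, so
`|f (f x) - φ| ≤ b/(a² + b) · |x - φ|`. Since every `s k ≥ a`, the error decays like
`(b/(a² + b))^(k/2)`. -/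

open Filter Topology

theorem le_max_mul_pow_half {u : ℕ → ℝ} {q : ℝ} (hq : 0 ≤ q) (h : ∀ n, u (n + 2) ≤ q * u n) :
    ∀ n, u n ≤ max (u 0) (u 1) * q ^ (n / 2)
  | 0 => by simp
  | 1 => by simp
  | n + 2 => by
    rw [show (n + 2) / 2 = n / 2 + 1 by omega, pow_succ']
    calc u (n + 2) ≤ q * u n := h n
      _ ≤ q * (max (u 0) (u 1) * q ^ (n / 2)) :=
        mul_le_mul_of_nonneg_left (le_max_mul_pow_half hq h n) hq
      _ = max (u 0) (u 1) * (q * q ^ (n / 2)) := by ring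

theorem tendsto_zero_of_le_mul_two_step {u : ℕ → ℝ} {q : ℝ} (hu : ∀ n, 0 ≤ u n) (hq₀ : 0 ≤ q)
    (hq₁ : q < 1) (h : ∀ n, u (n + 2) ≤ q * u n) : Tendsto u atTop (𝓝 0) := by
  have hpow : Tendsto (fun n : ℕ => q ^ (n / 2)) atTop (𝓝 0) :=
    (tendsto_pow_atTop_nhds_zero_of_lt_one hq₀ hq₁).comp (Nat.tendsto_div_const_atTop two_ne_zero)
  have hbound : Tendsto (fun n => max (u 0) (u 1) * q ^ (n / 2)) atTop (𝓝 0) := by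
    simpa using hpow.const_mul (max (u 0) (u 1))
  exact squeeze_zero hu (le_max_mul_pow_half hq₀ h) hbound

namespace GenContFrac

noncomputable def limit (a b : ℝ) : ℝ := (a + Real.sqrt (a ^ 2 + 4 * b)) / 2

variable {a b : ℝ}

theorem limit_sq (hb : 0 ≤ b) : limit a b ^ 2 = a * limit a b + b := by
  have := Real.sq_sqrt (show 0 ≤ a ^ 2 + 4 * b by positivity)
  unfold limit
  linear_combination this / 4

theorem lt_limit (hb : 0 < b) : a < limit a b := by
  have : |a| < Real.sqrt (a ^ 2 + 4 * b) := by
    rw [← Real.sqrt_sq_eq_abs]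
    exact Real.sqrt_lt_sqrt (sq_nonneg a) (by linarith)
  unfold limit
  linarith [le_abs_self a]

theorem limit_pos (ha : 0 < a) (hb : 0 < b) : 0 < limit a b :=
  ha.trans (lt_limit hb)

theorem add_div_sub_limit {x : ℝ} (hx : x ≠ 0) (ha : 0 < a) (hb : 0 < b) :
    a + b / x - limit a b = b / (x * limit a b) * (limit a b - x) := by
  have hφ := (limit_pos ha hb).ne'
  field_simp
  linear_combination (-x) * limit_sq (a := a) hb.le

theorem abs_add_div_sub_limit {x : ℝ} (hx : 0 < x) (ha : 0 < a) (hb : 0 < b) :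
    |a + b / x - limit a b| = b / (x * limit a b) * |x - limit a b| := by
  rw [add_div_sub_limit hx.ne' ha hb, abs_mul, abs_sub_comm,
    abs_of_pos (div_pos hb (mul_pos hx (limit_pos ha hb)))]

theorem abs_two_step_sub_limit_le {x : ℝ} (hx : a ≤ x) (ha : 0 < a) (hb : 0 < b) :
    |a + b / (a + b / x) - limit a b| ≤ b / (a ^ 2 + b) * |x - limit a b| := by
  set φ := limit a b
  set y := a + b / x
  have hx₀ : 0 < x := ha.trans_le hx
  have hy₀ : 0 < y := by positivity
  have hxy : a ^ 2 + b ≤ y * x := by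
    have : y * x = a * x + b := by simp only [y]; field_simp
    nlinarith
  have hφ : b ≤ φ ^ 2 := by nlinarith [limit_sq (a := a) hb.le, limit_pos ha hb]
  have hfactor : b / (y * φ) * (b / (x * φ)) ≤ b / (a ^ 2 + b) := by
    calc b / (y * φ) * (b / (x * φ)) = b ^ 2 / ((y * x) * φ ^ 2) := by field_simp
      _ ≤ b ^ 2 / ((a ^ 2 + b) * b) :=
        div_le_div_of_nonneg_left (by positivity) (by positivity)
          (mul_le_mul hxy hφ hb.le (by positivity))
      _ = b / (a ^ 2 + b) := by rw [pow_two, mul_div_mul_right _ _ hb.ne']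
  rw [abs_add_div_sub_limit hy₀ ha hb, abs_add_div_sub_limit hx₀ ha hb, ← mul_assoc]
  exact mul_le_mul_of_nonneg_right hfactor (abs_nonneg _)

theorem le_of_rec {s : ℕ → ℝ} (ha : 0 < a) (hb : 0 < b) (h0 : s 0 = a)
    (hrec : ∀ k, s (k + 1) = a + b / s k) : ∀ k, a ≤ s k
  | 0 => h0.ge
  | k + 1 => by
    have := div_pos hb (ha.trans_le (le_of_rec ha hb h0 hrec k))
    rw [hrec]
    linarith

end GenContFrac

open GenContFrac in
theorem gen_cont_frac_tendsto (a b : ℝ) (ha : 0 < a) (hb : 0 < b) (s : ℕ → ℝ)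
    (h0 : s 0 = a) (hrec : ∀ k, s (k + 1) = a + b / s k) :
    Filter.Tendsto s Filter.atTop
      (nhds ((a + Real.sqrt (a ^ 2 + 4 * b)) / 2)) := by
  have hs := le_of_rec ha hb h0 hrec
  have hcontract : ∀ k, |s (k + 2) - limit a b| ≤ b / (a ^ 2 + b) * |s k - limit a b| := by
    intro k
    rw [hrec, hrec]
    exact abs_two_step_sub_limit_le (hs k) ha hb
  have herr : Tendsto (fun k => |s k - limit a b|) atTop (𝓝 0) :=
    tendsto_zero_of_le_mul_two_step (fun _ => abs_nonneg _) (by positivity)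
      ((div_lt_one (by positivity)).mpr (by nlinarith)) hcontract
  exact tendsto_iff_norm_sub_tendsto_zero.mpr herr
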